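/- arXiv:1807.09450 — 6 statements merged into one kernel-verified Lean document; each statement's English description precedes it below -/
import Mathlib

section
/- Let H be a finite-dimensional involutory Hopf algebra over a field k, and let Λ₀ ∈ H be the element defined by ⟨h*, Λ₀⟩ = Tr(L(h*)) for all h* ∈ H*. Then Λ₀ is a left integral of H, i.e. h·Λ₀ = ε(h)·Λ₀ for all h ∈ H. -/
open scoped TensorProduct

/-- The convolution product on the dual `H* = Hom_k(H, k)` of a coalgebra `H`:
`(f * g)(h) = ∑ f(h₁) g(h₂)`. -/
noncomputable def convMul (k H : Type*) [CommSemiring k] [AddCommMonoid H] [Module k H]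
    [CoalgebraStruct k H] (f g : Module.Dual k H) : Module.Dual k H :=
  LinearMap.mul' k k ∘ₗ TensorProduct.map f g ∘ₗ Coalgebra.comul

/-- Left multiplication `L(f) : H* → H*, g ↦ f * g` by `f` in the convolution algebra `H*`,
as a `k`-linear endomorphism of `H*`. -/
noncomputable def convL (k H : Type*) [CommSemiring k] [AddCommMonoid H] [Module k H]
    [CoalgebraStruct k H] (f : Module.Dual k H) :
    Module.Dual k H →ₗ[k] Module.Dual k H where
  toFun g := convMul k H f g
  map_add' g₁ g₂ := by
    simp only [convMul, TensorProduct.map_add_right, LinearMap.add_comp, LinearMap.comp_add]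
  map_smul' c g := by
    simp only [convMul, TensorProduct.map_smul_right, LinearMap.smul_comp, LinearMap.comp_smul,
      RingHom.id_apply]

/-!
`Λ₀` is a left integral iff `f (h * Λ₀) = ε(h) f(Λ₀)` for all `f ∈ H*`, i.e. iff
`Tr L(f ∘ L_h) = ε(h) Tr L(f)`. Now `L(f)` is the transpose of the right hit action
`x ↦ ∑ f(x₁) x₂`, and for involutory `H` the hit action of `f ∘ L_h` is
`∑ L_{S(h₂)} ∘ (hit action of f) ∘ L_{h₁}`. Cyclicity of the trace turns this into the hit action
of `f` composed with `L_{∑ h₁ S(h₂)} = ε(h) • id`.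
-/

open TensorProduct Coalgebra HopfAlgebra LinearMap

section CoalgebraStruct
variable {R A : Type*} [CommSemiring R] [AddCommMonoid A] [Module R A] [CoalgebraStruct R A]

/-- The right hit action `x ↼ f = ∑ f(x₁) x₂` of `A*` on `A`. -/
noncomputable def rightHit : Module.Dual R A →ₗ[R] Module.End R A where
  toFun f := (TensorProduct.lid R A).toLinearMap ∘ₗ f.rTensor A ∘ₗ comul
  map_add' f g := by simp only [rTensor_add, add_comp, comp_add]
  map_smul' c f := by simp only [rTensor_smul, smul_comp, comp_smul, RingHom.id_apply]

lemma rightHit_apply {ι : Type*} (f : Module.Dual R A) {x : A} (s : Repr R x ι) :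
    rightHit f x = ∑ k ∈ s.index, f (s.left k) • s.right k := by
  simp [rightHit, ← s.eq]

lemma convL_eq_transpose (f : Module.Dual R A) :
    convL R A f = Module.Dual.transpose (R := R) (rightHit f) := by
  ext g x
  change _root_.convMul R A f g x = _
  simp [_root_.convMul, Module.Dual.transpose_apply, rightHit_apply f (ℛ R x), ← (ℛ R x).eq]

end CoalgebraStruct

lemma sum_counit_right_smul_left {R A : Type*} [CommSemiring R] [AddCommMonoid A]
    [Module R A] [Coalgebra R A] {ι : Type*} {a : A} (r : Repr R a ι) :
    ∑ i ∈ r.index, counit (R := R) (r.right i) • r.left i = a := by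
  simpa only [map_sum, TensorProduct.rid_tmul, one_smul]
    using congr(TensorProduct.rid R A $(sum_tmul_counit_eq r))

lemma rightHit_mul_apply {R A : Type*} [CommSemiring R] [Semiring A] [Bialgebra R A]
    {ι : Type*} (f : Module.Dual R A) {h : A} (r : Repr R h ι) (x : A) :
    rightHit f (h * x) = ∑ i ∈ r.index, r.right i * rightHit (f ∘ₗ mulLeft R (r.left i)) x := by
  let s := ℛ R x
  simp only [rightHit_apply f (r.mul s), rightHit_apply _ s, Repr.mul_index, Repr.mul_left,
    Repr.mul_right, Finset.sum_product, Finset.mul_sum, comp_apply, mulLeft_apply,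
    mul_smul_comm]

section Involutory
variable {R A : Type*} [CommSemiring R] [Semiring A] [HopfAlgebra R A]

lemma sum_antipode_right_mul_left_eq_smul (hinv : ∀ x : A, antipode R (antipode R x) = x)
    {ι : Type*} {c : A} (r : Repr R c ι) :
    ∑ i ∈ r.index, antipode R (r.right i) * r.left i = counit (R := R) c • 1 := by
  calc ∑ i ∈ r.index, antipode R (r.right i) * r.left i
      = antipode R (∑ i ∈ r.index, antipode R (r.left i) * r.right i) := by
        simp only [map_sum, antipode_mul_antidistrib, hinv]
    _ = counit (R := R) c • 1 := by
        rw [sum_antipode_mul_eq_smul, map_smul, antipode_one]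

/-- In Sweedler notation the right-hand side sends `x` to `∑ f(h₁ x₁) S(h₃) h₂ x₂`, and
`∑ S(h₃) h₂ ⊗ h₁ = 1 ⊗ h` because `H` is involutory. -/
lemma rightHit_comp_mulLeft (hinv : ∀ x : A, antipode R (antipode R x) = x)
    (f : Module.Dual R A) {ι : Type*} {h : A} (r : Repr R h ι) :
    rightHit (f ∘ₗ mulLeft R h) =
      ∑ i ∈ r.index, mulLeft R (antipode R (r.right i)) ∘ₗ rightHit f ∘ₗ mulLeft R (r.left i) := by
  ext x
  let s := ℛ R x
  let rl := fun i => ℛ R (r.left i)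
  let rr := fun i => ℛ R (r.right i)
  let Ψ : A ⊗[R] (A ⊗[R] A) →ₗ[R] A := ∑ k ∈ s.index,
    (TensorProduct.lid R A).toLinearMap ∘ₗ
      map (f ∘ₗ mulRight R (s.left k))
        (mulRight R (s.right k) ∘ₗ mul' R A ∘ₗ map (antipode R) id ∘ₗ
          (TensorProduct.comm R A A).toLinearMap)
  have hΨ : ∀ a b c : A, Ψ (a ⊗ₜ (b ⊗ₜ c)) =
      antipode R c * b * rightHit (f ∘ₗ mulLeft R a) x := by
    intro a b c
    simp [Ψ, rightHit_apply _ s, Finset.mul_sum, mul_assoc]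
  have coassoc := congrArg Ψ (sum_tmul_tmul_eq r rl rr)
  simp only [map_sum, hΨ] at coassoc
  have hf : f ∘ₗ mulLeft R h =
      ∑ i ∈ r.index, counit (R := R) (r.right i) • (f ∘ₗ mulLeft R (r.left i)) := by
    ext y
    conv_lhs => rw [← sum_counit_right_smul_left r]
    simp [Finset.sum_mul]
  calc rightHit (f ∘ₗ mulLeft R h) x
      = ∑ i ∈ r.index, counit (R := R) (r.right i) • rightHit (f ∘ₗ mulLeft R (r.left i)) x := by
        simp [hf]
    _ = ∑ i ∈ r.index, ∑ j ∈ (rr i).index, antipode R ((rr i).right j) * (rr i).left j *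
          rightHit (f ∘ₗ mulLeft R (r.left i)) x := by
        simp [← Finset.sum_mul, sum_antipode_right_mul_left_eq_smul hinv]
    _ = ∑ i ∈ r.index, ∑ j ∈ (rl i).index, antipode R (r.right i) * (rl i).right j *
          rightHit (f ∘ₗ mulLeft R ((rl i).left j)) x := coassoc.symm
    _ = (∑ i ∈ r.index,
          mulLeft R (antipode R (r.right i)) ∘ₗ rightHit f ∘ₗ mulLeft R (r.left i)) x := by
        simp [rightHit_mul_apply f (rl _), mul_assoc]

end Involutory

lemma trace_rightHit_comp_mulLeft {R A : Type*} [CommRing R] [Ring A] [HopfAlgebra R A]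
    [Module.Free R A] [Module.Finite R A] (hinv : ∀ x : A, antipode R (antipode R x) = x)
    (f : Module.Dual R A) (h : A) :
    trace R A (rightHit (f ∘ₗ mulLeft R h)) = counit (R := R) h * trace R A (rightHit f) := by
  let r := ℛ R h
  have hunit : mulLeft R (counit (R := R) h • (1 : A)) = counit (R := R) h • LinearMap.id := by
    ext y
    simp
  calc trace R A (rightHit (f ∘ₗ mulLeft R h))
      = ∑ i ∈ r.index,
          trace R A (rightHit f ∘ₗ mulLeft R (r.left i * antipode R (r.right i))) := by
        rw [rightHit_comp_mulLeft hinv f r, map_sum]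
        refine Finset.sum_congr rfl fun i _ => ?_
        rw [trace_comp_comm', comp_assoc, mulLeft_mul]
    _ = trace R A
          (rightHit f ∘ₗ mulLeft R (∑ i ∈ r.index, r.left i * antipode R (r.right i))) := by
        rw [← map_sum]
        congr 1
        ext y
        simp [Finset.sum_mul, mul_assoc]
    _ = counit (R := R) h * trace R A (rightHit f) := by
        rw [sum_mul_antipode_eq_smul, hunit, comp_smul, comp_id, map_smul, smul_eq_mul]

/-- Let `H` be a finite-dimensional involutory Hopf algebra over `k`, and let
`Λ₀ ∈ H` be the element defined by `⟨f, Λ₀⟩ = Tr(L(f))` for all `f ∈ H*`.  Then `Λ₀` is a left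
integral of `H`: `h * Λ₀ = ε(h) • Λ₀` for all `h ∈ H`. -/
theorem integral_of_trace_left_convolution
    {k H : Type*} [Field k] [Ring H] [HopfAlgebra k H] [FiniteDimensional k H]
    (hinv : ∀ h : H, HopfAlgebra.antipode (R := k) (HopfAlgebra.antipode (R := k) h) = h)
    (Λ₀ : H)
    (hΛ : ∀ f : Module.Dual k H, f Λ₀ = LinearMap.trace k (Module.Dual k H) (convL k H f)) :
    ∀ h : H, h * Λ₀ = Coalgebra.counit (R := k) h • Λ₀ := by
  have trace_convL (f : Module.Dual k H) : f Λ₀ = trace k H (rightHit f) := by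
    rw [hΛ, convL_eq_transpose, trace_transpose']
  intro h
  refine Module.eval_apply_injective k (LinearMap.ext fun f => ?_)
  calc f (h * Λ₀) = (f ∘ₗ mulLeft k h) Λ₀ := rfl
    _ = counit (R := k) h * trace k H (rightHit f) := by
        rw [trace_convL, trace_rightHit_comp_mulLeft hinv f h]
    _ = f (counit (R := k) h • Λ₀) := by rw [map_smul, trace_convL, smul_eq_mul]
end

section
/- Let H be a finite-dimensional involutory Hopf algebra over a field k. Suppose there are finitely many multiplicative matrices D^{(1)}, D^{(2)}, …, D^{(m)} over H, of sizes r_1 × r_1, …, r_m × r_m, with D^{(1)} = (1_H) the 1×1 matrix whose only entry is the identity of H (so r_1 = 1), such that the entries of D^{(1)}, …, D^{(m)} taken together form a basis of H. Let Λ₀ ∈ H be the element defined by ⟨h*, Λ₀⟩ = Tr(L(h*)) for all h* ∈ H*, and for each l let t_l denote the sum of the diagonal entries of D^{(l)}. Then Λ₀ = Σ_{l=1}^m r_l · t_l = 1_H + Σ_{l=2}^m r_l · t_l. -/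
/-! In the basis of `H*` dual to the matrix entries `D^l_{ij}`, the diagonal entry of `L(f)` at
`(l, i, j)` is `(f * e^l_{ij})(D^l_{ij}) = ∑ s, f(D^l_{is}) e^l_{ij}(D^l_{sj}) = f(D^l_{ii})`.
Summing over `j` gives `Tr L(f) = f(∑ l, r_l t_l)` for every `f`, and functionals separate the
points of `H`. -/

open scoped TensorProduct

/-- A square matrix `G` over a coalgebra `H` is *multiplicative* if
`Δ(g_{ij}) = ∑ l, g_{il} ⊗ g_{lj}` and `ε(g_{ij}) = δ_{ij}`. -/
def IsMultiplicativeMatrix (k : Type*) {H n : Type*} [CommSemiring k] [AddCommMonoid H]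
    [Module k H] [CoalgebraStruct k H] [Fintype n] [DecidableEq n]
    (G : Matrix n n H) : Prop :=
  (∀ i j, Coalgebra.comul (R := k) (G i j) = ∑ l, G i l ⊗ₜ[k] G l j) ∧
  (∀ i j, Coalgebra.counit (R := k) (G i j) = if i = j then 1 else 0)

theorem convL_apply {k H : Type*} [CommSemiring k] [AddCommMonoid H] [Module k H]
    [CoalgebraStruct k H] (f g : Module.Dual k H) : convL k H f g = convMul k H f g :=
  rfl

theorem LinearMap.trace_dual_eq_sum_coord {R M ι : Type*} [CommRing R] [AddCommGroup M]
    [Module R M] [Fintype ι] (b : Module.Basis ι R M)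
    (φ : Module.Dual R M →ₗ[R] Module.Dual R M) :
    LinearMap.trace R (Module.Dual R M) φ = ∑ p, φ (b.coord p) (b p) := by
  classical
  simp [LinearMap.trace_eq_matrix_trace R b.dualBasis, Matrix.trace, LinearMap.toMatrix_apply]

theorem convMul_apply_of_comul_eq {k H n : Type*} [CommSemiring k] [AddCommMonoid H]
    [Module k H] [CoalgebraStruct k H] [Fintype n] {G : Matrix n n H}
    (hΔ : ∀ i j, Coalgebra.comul (R := k) (G i j) = ∑ l, G i l ⊗ₜ[k] G l j)
    (f g : Module.Dual k H) (i j : n) :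
    convMul k H f g (G i j) = ∑ l, f (G i l) * g (G l j) := by
  simp [convMul, hΔ]

theorem trace_convL_eq_apply_sum_traces {k H ι : Type*} {n : ι → Type*} [CommRing k]
    [AddCommGroup H] [Module k H] [CoalgebraStruct k H] [Fintype ι] [∀ l, Fintype (n l)]
    (D : ∀ l, Matrix (n l) (n l) H)
    (hΔ : ∀ l i j, Coalgebra.comul (R := k) (D l i j) = ∑ s, D l i s ⊗ₜ[k] D l s j)
    (b : Module.Basis (Σ l, n l × n l) k H) (hb : ∀ l i j, b ⟨l, (i, j)⟩ = D l i j)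
    (f : Module.Dual k H) :
    LinearMap.trace k (Module.Dual k H) (convL k H f) =
      f (∑ l, Fintype.card (n l) • (D l).trace) := by
  classical
  have hdiag : ∀ l i j, convL k H f (b.coord ⟨l, (i, j)⟩) (b ⟨l, (i, j)⟩) = f (D l i i) := by
    intro l i j
    have hcoord : ∀ s, b.coord ⟨l, (i, j)⟩ (D l s j) = if s = i then 1 else 0 := by
      intro s
      rw [← hb, Module.Basis.coord_apply, Module.Basis.repr_self, Finsupp.single_apply]
      simp
    rw [convL_apply, hb, convMul_apply_of_comul_eq (hΔ l)]
    simp [hcoord]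
  rw [LinearMap.trace_dual_eq_sum_coord b, ← Finset.univ_sigma_univ, Finset.sum_sigma]
  simp [hdiag, Fintype.sum_prod_type, Matrix.trace, Finset.mul_sum]

theorem trace_integral_eq_sum_multiplicative_traces_general
    {k H : Type*} [Field k] [Ring H] [HopfAlgebra k H]
    (m : ℕ) [NeZero m] (r : Fin m → ℕ)
    (D : ∀ l : Fin m, Matrix (Fin (r l)) (Fin (r l)) H)
    (hmul : ∀ l, IsMultiplicativeMatrix k (D l))
    (hr0 : r 0 = 1) (hD0 : ∀ i j, D 0 i j = 1)
    (b : Module.Basis (Σ l : Fin m, Fin (r l) × Fin (r l)) k H)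
    (hb : ∀ (l : Fin m) (i j : Fin (r l)), b ⟨l, (i, j)⟩ = D l i j)
    (Λ₀ : H)
    (hΛ : ∀ f : Module.Dual k H, f Λ₀ = LinearMap.trace k (Module.Dual k H) (convL k H f)) :
    Λ₀ = ∑ l, r l • (∑ i, D l i i) ∧
    Λ₀ = 1 + ∑ l ∈ Finset.univ.erase (0 : Fin m), r l • (∑ i, D l i i) := by
  have hΛ_eq : Λ₀ = ∑ l, r l • (∑ i, D l i i) :=
    Module.eval_apply_injective k <| LinearMap.ext fun f => by
      simpa [hΛ, Matrix.trace] using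
        trace_convL_eq_apply_sum_traces D (fun l => (hmul l).1) b hb f
  refine ⟨hΛ_eq, ?_⟩
  rw [hΛ_eq, ← Finset.add_sum_erase _ _ (Finset.mem_univ 0)]
  simp [hr0, hD0]

/-- Let `H` be a finite-dimensional involutory Hopf algebra over `k`.  Suppose
`D 0, D 1, …` are finitely many multiplicative matrices over `H`, of sizes `r l × r l`, with
`D 0 = (1_H)` the `1 × 1` matrix with entry `1`, whose entries taken together form a basis of
`H`.  Let `Λ₀` be defined by `⟨f, Λ₀⟩ = Tr(L(f))` for all `f ∈ H*`, and let `t l` denote the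
trace (sum of the diagonal entries) of `D l`.  Then `Λ₀ = ∑ l, r l • t l
= 1 + ∑_{l ≠ 0} r l • t l`. -/
theorem trace_integral_eq_sum_multiplicative_traces
    {k H : Type*} [Field k] [Ring H] [HopfAlgebra k H] [FiniteDimensional k H]
    (hinv : ∀ h : H, HopfAlgebra.antipode (R := k) (HopfAlgebra.antipode (R := k) h) = h)
    (m : ℕ) [NeZero m] (r : Fin m → ℕ)
    (D : ∀ l : Fin m, Matrix (Fin (r l)) (Fin (r l)) H)
    (hmul : ∀ l, IsMultiplicativeMatrix k (D l))
    (hr0 : r 0 = 1) (hD0 : ∀ i j, D 0 i j = 1)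
    (b : Module.Basis (Σ l : Fin m, Fin (r l) × Fin (r l)) k H)
    (hb : ∀ (l : Fin m) (i j : Fin (r l)), b ⟨l, (i, j)⟩ = D l i j)
    (Λ₀ : H)
    (hΛ : ∀ f : Module.Dual k H, f Λ₀ = LinearMap.trace k (Module.Dual k H) (convL k H f)) :
    Λ₀ = ∑ l, r l • (∑ i, D l i i) ∧
    Λ₀ = 1 + ∑ l ∈ Finset.univ.erase (0 : Fin m), r l • (∑ i, D l i i) :=
  trace_integral_eq_sum_multiplicative_traces_general m r D hmul hr0 hD0 b hb Λ₀ hΛ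
end

section
/- Let H be a bialgebra over a field k, let C = (c_{ik}) ∈ M_r(H) be a multiplicative matrix, and let W = (w_1, …, w_r)^T ∈ M_{r×1}(H) be a column vector satisfying Δ(w_i) = Σ_{k=1}^r c_{ik} ⊗ w_k + w_i ⊗ 1_H for all 1 ≤ i ≤ r (i.e. W is a (C, 1)-primitive matrix). Then for every positive integer n, the column W^{[n]} obtained by applying the n-th Hopf power map entrywise to W satisfies W^{[n]} = (I_r + C + C^2 + ⋯ + C^{n−1})·W. -/
open scoped TensorProduct

/-- The `n`-th Hopf power map `[n] = m_n ∘ Δ_n` of a bialgebra, defined recursively by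
`h^[0] = ε(h)1`, `h^[n+1] = ∑ h₁ * (h₂)^[n]` (so that `h^[1] = h`). -/
noncomputable def hopfPow (k H : Type*) [CommSemiring k] [Semiring H] [Algebra k H]
    [CoalgebraStruct k H] : ℕ → H →ₗ[k] H
  | 0 => Algebra.linearMap k H ∘ₗ Coalgebra.counit
  | n + 1 => LinearMap.mul' k H ∘ₗ LinearMap.lTensor H (hopfPow k H n) ∘ₗ Coalgebra.comul

/-!
Feeding `Δ(wᵢ) = ∑ c_{il} ⊗ w_l + wᵢ ⊗ 1` into the recursion `h^[n+1] = ∑ h₁ (h₂)^[n]` and using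
`1^[n] = 1` gives `W^[n+1] = C W^[n] + W`, while counitality together with `ε(c_{il}) = δ_{il}`
forces `ε(wᵢ) = 0`, i.e. `W^[0] = 0`. Iterating yields the geometric sum `(∑_{j<n} C^j) W`.
-/

open Coalgebra

lemma hopfPow_apply_one (k H : Type*) [CommSemiring k] [Semiring H] [Bialgebra k H] (n : ℕ) :
    hopfPow k H n 1 = 1 := by
  induction n with
  | zero => simp [hopfPow]
  | succ n ih => simp [hopfPow, Algebra.TensorProduct.one_def, ih]

section PrimitiveColumn

variable {k H ι : Type*} [Fintype ι] {C : Matrix ι ι H} {W : ι → H}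

lemma hopfPow_succ_apply_of_comul_eq [CommSemiring k] [Semiring H] [Bialgebra k H]
    (hW : ∀ i, comul (R := k) (W i) = (∑ l, C i l ⊗ₜ[k] W l) + W i ⊗ₜ[k] 1) (n : ℕ) (i : ι) :
    hopfPow k H (n + 1) (W i) = ∑ l, C i l * hopfPow k H n (W l) + W i := by
  simp [hopfPow, hW i, hopfPow_apply_one]

-- Applying `ε ⊗ ε` to `Δ(wᵢ)` gives `ε(wᵢ) = ε(wᵢ) + ε(wᵢ)`.
lemma counit_eq_zero_of_comul_eq [DecidableEq ι] [CommRing k] [Semiring H] [Bialgebra k H]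
    (hC : ∀ i j, counit (R := k) (C i j) = if i = j then 1 else 0)
    (hW : ∀ i, comul (R := k) (W i) = (∑ l, C i l ⊗ₜ[k] W l) + W i ⊗ₜ[k] 1) (i : ι) :
    counit (R := k) (W i) = 0 := by
  simpa [hW i, hC] using
    congrArg (counit (R := k) ∘ TensorProduct.lid k H) (rTensor_counit_comul (W i))

lemma hopfPow_apply_eq_geom_sum_mulVec [DecidableEq ι] [CommRing k] [Semiring H] [Bialgebra k H]
    (hC : ∀ i j, counit (R := k) (C i j) = if i = j then 1 else 0)
    (hW : ∀ i, comul (R := k) (W i) = (∑ l, C i l ⊗ₜ[k] W l) + W i ⊗ₜ[k] 1) (n : ℕ) (i : ι) :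
    hopfPow k H n (W i) = (∑ j ∈ Finset.range n, C ^ j).mulVec W i := by
  induction n generalizing i with
  | zero => simp [hopfPow, counit_eq_zero_of_comul_eq hC hW]
  | succ n ih =>
    rw [hopfPow_succ_apply_of_comul_eq hW, geom_sum_succ, Matrix.add_mulVec, Matrix.one_mulVec,
      ← Matrix.mulVec_mulVec]
    simp only [ih]
    rfl

end PrimitiveColumn

theorem hopfPow_primitive_column_general
    {k H : Type*} [Field k] [Ring H] [Bialgebra k H]
    {r : ℕ} (C : Matrix (Fin r) (Fin r) H) (hC : IsMultiplicativeMatrix k C)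
    (W : Fin r → H)
    (hW : ∀ i, Coalgebra.comul (R := k) (W i) = (∑ l, C i l ⊗ₜ[k] W l) + W i ⊗ₜ[k] 1)
    (n : ℕ) :
    (fun i => hopfPow k H n (W i)) = (∑ i ∈ Finset.range n, C ^ i).mulVec W :=
  funext (hopfPow_apply_eq_geom_sum_mulVec hC.2 hW n)

/-- **Statement 9.** Let `C` be a multiplicative `r × r` matrix over a bialgebra `H`, and let
`W = (w_1, …, w_r)ᵀ` be a column vector with `Δ(wᵢ) = ∑ l, c_{il} ⊗ w_l + wᵢ ⊗ 1` (a
`(C, 1)`-primitive matrix).  Then for every positive integer `n`, applying the `n`-th Hopf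
power map entrywise to `W` gives `(I + C + C² + ⋯ + C^{n-1}) · W`. -/
theorem hopfPow_primitive_column
    {k H : Type*} [Field k] [Ring H] [Bialgebra k H]
    {r : ℕ} (C : Matrix (Fin r) (Fin r) H) (hC : IsMultiplicativeMatrix k C)
    (W : Fin r → H)
    (hW : ∀ i, Coalgebra.comul (R := k) (W i) = (∑ l, C i l ⊗ₜ[k] W l) + W i ⊗ₜ[k] 1)
    (n : ℕ) (hn : 0 < n) :
    (fun i => hopfPow k H n (W i)) = (∑ i ∈ Finset.range n, C ^ i).mulVec W :=
  hopfPow_primitive_column_general C hC W hW n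
end

section
/- Let k be a field of characteristic p > 0 and let H be a bialgebra over k. Let Z ∈ M_N(H) be a multiplicative matrix and let d, n be positive integers such that (Z^d − I_N)^{n+1} = 0 in the matrix ring M_N(H) (this holds, in particular, when Z is block upper triangular with n+1 diagonal blocks G_0, …, G_n satisfying G_0^d = ⋯ = G_n^d = I). Set m = ⌊log_p n⌋ + 1. Then Z^{d·p^m} = I_N, and the matrix obtained by applying the (d·p^m)-th Hopf power map entrywise to Z equals I_N; in particular, every entry of Z has trivial (d·p^m)-th Hopf power. -/
/-! Multiplicativity of `Z` says exactly that the entrywise Hopf power `Z.map [r]` is the matrix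
power `Z ^ r`, so everything reduces to `Z ^ (d p^m) = 1`. In characteristic `p` the Frobenius
identity `(A - 1) ^ p^m = A ^ p^m - 1` for `A = Z ^ d` gives this as soon as `p^m > n`, which is
what `m = ⌊log_p n⌋ + 1` guarantees. -/

open scoped TensorProduct

namespace IsMultiplicativeMatrix

variable {k H ι : Type*} [CommSemiring k] [Semiring H] [Algebra k H] [CoalgebraStruct k H]
  [Fintype ι] [DecidableEq ι] {G : Matrix ι ι H}

theorem counit_smul_one (hG : IsMultiplicativeMatrix k G) (i j : ι) :
    Coalgebra.counit (R := k) (G i j) • (1 : H) = (1 : Matrix ι ι H) i j := by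
  rw [hG.2 i j, Matrix.one_apply]
  split_ifs <;> simp

theorem map_hopfPow (hG : IsMultiplicativeMatrix k G) (m : ℕ) :
    G.map (hopfPow k H m) = G ^ m := by
  induction m with
  | zero =>
    ext i j
    simpa [hopfPow, Algebra.smul_def] using hG.counit_smul_one i j
  | succ m ih =>
    ext i j
    simp only [Matrix.map_apply, hopfPow, LinearMap.coe_comp, Function.comp_apply, hG.1 i j,
      map_sum, LinearMap.lTensor_tmul, LinearMap.mul'_apply, pow_succ', Matrix.mul_apply,
      ← ih]

end IsMultiplicativeMatrix

theorem pow_char_pow_eq_one_of_sub_one_pow_eq_zero {R : Type*} [Ring R] (p : ℕ) [Fact p.Prime]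
    [CharP R p] {A : R} {n : ℕ} (h : (A - 1) ^ (n + 1) = 0) :
    A ^ p ^ (Nat.log p n + 1) = 1 := by
  have hle : n + 1 ≤ p ^ (Nat.log p n + 1) :=
    Nat.lt_pow_succ_log_self (Fact.out : p.Prime).one_lt n
  have hfrob := sub_pow_char_pow_of_commute p (Nat.log p n + 1) (Commute.one_right A)
  rw [pow_eq_zero_of_le hle h, one_pow, eq_comm, sub_eq_zero] at hfrob
  exact hfrob

theorem Algebra.pow_char_pow_eq_one_of_sub_one_pow_eq_zero {k R : Type*} [Field k] [Ring R]
    [Algebra k R] (p : ℕ) [CharP k p] {A : R} {n : ℕ} (h : (A - 1) ^ (n + 1) = 0) :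
    A ^ p ^ (Nat.log p n + 1) = 1 := by
  rcases subsingleton_or_nontrivial R with hR | hR
  · exact Subsingleton.elim _ _
  rcases CharP.char_is_prime_or_zero k p with hp | rfl
  · have := Fact.mk hp
    have := charP_of_injective_algebraMap' k (A := R) p
    exact _root_.pow_char_pow_eq_one_of_sub_one_pow_eq_zero p h
  · simp

theorem multiplicativeMatrix_unipotent_hopfPow_trivial_general
    {k H : Type*} [Field k] [Ring H] [Bialgebra k H]
    (p : ℕ) [CharP k p]
    {N : ℕ} (Z : Matrix (Fin N) (Fin N) H) (hZ : IsMultiplicativeMatrix k Z)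
    (d n : ℕ)
    (hnil : (Z ^ d - 1) ^ (n + 1) = 0) :
    Z ^ (d * p ^ (Nat.log p n + 1)) = 1 ∧
    Z.map (fun x => hopfPow k H (d * p ^ (Nat.log p n + 1)) x) = 1 ∧
    ∀ i j, hopfPow k H (d * p ^ (Nat.log p n + 1)) (Z i j) =
      Coalgebra.counit (R := k) (Z i j) • 1 := by
  have hpow : Z ^ (d * p ^ (Nat.log p n + 1)) = 1 := by
    rw [pow_mul]
    exact Algebra.pow_char_pow_eq_one_of_sub_one_pow_eq_zero (k := k) p hnil
  have hmap : Z.map (fun x => hopfPow k H (d * p ^ (Nat.log p n + 1)) x) = 1 := by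
    rw [hZ.map_hopfPow, hpow]
  refine ⟨hpow, hmap, fun i j => ?_⟩
  rw [hZ.counit_smul_one, ← hmap, Matrix.map_apply]

/-- Let `k` be a field of characteristic `p > 0`, `H` a `k`-bialgebra, and
`Z` a multiplicative `N × N` matrix over `H` with `(Z^d - I)^{n+1} = 0` for positive integers
`d, n` (as happens for block upper triangular `Z` with `n+1` diagonal blocks whose `d`-th
powers are identity matrices).  With `m = ⌊log_p n⌋ + 1`, we have `Z^(d·p^m) = I`, the
entrywise `(d·p^m)`-th Hopf power of `Z` is the identity matrix, and in particular every entry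
of `Z` has trivial `(d·p^m)`-th Hopf power. -/
theorem multiplicativeMatrix_unipotent_hopfPow_trivial
    {k H : Type*} [Field k] [Ring H] [Bialgebra k H]
    (p : ℕ) [CharP k p] (hp : p ≠ 0)
    {N : ℕ} (Z : Matrix (Fin N) (Fin N) H) (hZ : IsMultiplicativeMatrix k Z)
    (d n : ℕ) (hd : 0 < d) (hn : 0 < n)
    (hnil : (Z ^ d - 1) ^ (n + 1) = 0) :
    Z ^ (d * p ^ (Nat.log p n + 1)) = 1 ∧
    Z.map (fun x => hopfPow k H (d * p ^ (Nat.log p n + 1)) x) = 1 ∧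
    ∀ i j, hopfPow k H (d * p ^ (Nat.log p n + 1)) (Z i j) =
      Coalgebra.counit (R := k) (Z i j) • 1 :=
  multiplicativeMatrix_unipotent_hopfPow_trivial_general p Z hZ d n hnil
end

section
/- Let k be a field of characteristic p > 0, let H be a bialgebra over k, let d be a positive integer, let g, h ∈ H be grouplike elements with g^d = 1_H and h^d = 1_H, and let w ∈ H satisfy Δ(w) = g ⊗ w + w ⊗ h. Then w has trivial (d·p)-th Hopf power: w^{[dp]} = ε(w)·1_H = 0. -/
/-!
Writing `w^[n]` for `hopfPow n w`, the recursion and `Δ(w) = g ⊗ w + w ⊗ h` give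
`w^[n+1] = g w^[n] + w h^n`, hence the cocycle rule `w^[m+n] = w^[m] h^n + g^m w^[n]`
(the counit axiom forces `ε(w) = 0`, i.e. `w^[0] = 0`). When `g^d = h^d = 1` this makes
`m ↦ w^[dm]` additive, so `w^[dp] = p • w^[d]`, which vanishes in characteristic `p`.
-/

open scoped TensorProduct

open Coalgebra

section

variable {R A : Type*} [CommSemiring R] [Semiring A] [Algebra R A]

lemma hopfPow_zero_apply [CoalgebraStruct R A] (x : A) :
    hopfPow R A 0 x = counit (R := R) x • 1 := by
  simp [hopfPow, Algebra.algebraMap_eq_smul_one]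

lemma hopfPow_succ_apply [CoalgebraStruct R A] (n : ℕ) (x : A) :
    hopfPow R A (n + 1) x = LinearMap.mul' R A ((hopfPow R A n).lTensor A (comul x)) :=
  rfl

lemma IsGroupLikeElem.hopfPow_eq_pow [Coalgebra R A] {h : A} (hh : IsGroupLikeElem R h)
    (n : ℕ) : hopfPow R A n h = h ^ n := by
  induction n with
  | zero => simp [hopfPow_zero_apply, hh.counit_eq_one]
  | succ n ih =>
    rw [hopfPow_succ_apply, hh.comul_eq_tmul_self, LinearMap.lTensor_tmul,
      LinearMap.mul'_apply, ih, pow_succ']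

end

def IsSkewPrimitive (R : Type*) {A : Type*} [CommSemiring R] [AddCommMonoid A] [Module R A]
    [CoalgebraStruct R A] (g h w : A) : Prop :=
  comul (R := R) w = g ⊗ₜ[R] w + w ⊗ₜ[R] h

namespace IsSkewPrimitive

lemma counit_eq_zero {R A : Type*} [CommSemiring R] [AddCommGroup A] [Module R A]
    [Coalgebra R A] {g h w : A} (hw : IsSkewPrimitive R g h w)
    (hg : counit (R := R) g = 1) (hh : counit (R := R) h = 1) : counit (R := R) w = 0 := by
  have hsum : w + counit (R := R) w • h = w := by
    have := congrArg (TensorProduct.lid R A) (rTensor_counit_comul (R := R) w)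
    rwa [hw, map_add, LinearMap.rTensor_tmul, LinearMap.rTensor_tmul, hg, map_add,
      TensorProduct.lid_tmul, TensorProduct.lid_tmul, one_smul] at this
  have hsmul : counit (R := R) w • h = 0 := by simpa using hsum
  simpa [hh] using congrArg (counit (R := R)) hsmul

variable {R A : Type*} [CommSemiring R] [Semiring A] [Algebra R A] [Coalgebra R A]
  {g h w : A}

lemma hopfPow_succ (hw : IsSkewPrimitive R g h w) (hh : IsGroupLikeElem R h) (n : ℕ) :
    hopfPow R A (n + 1) w = g * hopfPow R A n w + w * h ^ n := by
  rw [hopfPow_succ_apply, hw, map_add, map_add, LinearMap.lTensor_tmul, LinearMap.lTensor_tmul,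
    LinearMap.mul'_apply, LinearMap.mul'_apply, hh.hopfPow_eq_pow]

lemma hopfPow_add (hw : IsSkewPrimitive R g h w) (hh : IsGroupLikeElem R h)
    (hw₀ : counit (R := R) w = 0) (m n : ℕ) :
    hopfPow R A (m + n) w = hopfPow R A m w * h ^ n + g ^ m * hopfPow R A n w := by
  induction m with
  | zero => simp [hopfPow_zero_apply, hw₀]
  | succ m ih =>
    rw [Nat.add_right_comm, hw.hopfPow_succ hh, ih, hw.hopfPow_succ hh]
    simp only [mul_add, add_mul, ← mul_assoc, ← pow_succ', mul_assoc w, ← pow_add]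
    abel

lemma hopfPow_mul (hw : IsSkewPrimitive R g h w) (hh : IsGroupLikeElem R h)
    (hw₀ : counit (R := R) w = 0) {d : ℕ} (hgd : g ^ d = 1) (hhd : h ^ d = 1) (m : ℕ) :
    hopfPow R A (d * m) w = m • hopfPow R A d w := by
  induction m with
  | zero => simp [hopfPow_zero_apply, hw₀]
  | succ m ih =>
    rw [Nat.mul_succ, add_comm, hw.hopfPow_add hh hw₀, pow_mul, hhd, one_pow, mul_one, hgd,
      one_mul, ih, succ_nsmul']

end IsSkewPrimitive

theorem skewPrimitive_hopfPow_trivial_charP_general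
    {k H : Type*} [Field k] [Ring H] [Bialgebra k H]
    (p : ℕ) [CharP k p]
    (d : ℕ)
    (g h w : H)
    (hgε : Coalgebra.counit (R := k) g = 1)
    (hhΔ : Coalgebra.comul (R := k) h = h ⊗ₜ[k] h) (hhε : Coalgebra.counit (R := k) h = 1)
    (hgd : g ^ d = 1) (hhd : h ^ d = 1)
    (hw : Coalgebra.comul (R := k) w = g ⊗ₜ[k] w + w ⊗ₜ[k] h) :
    hopfPow k H (d * p) w = Coalgebra.counit (R := k) w • 1 ∧
    hopfPow k H (d * p) w = 0 := by
  have hskew : IsSkewPrimitive k g h w := hw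
  have hh : IsGroupLikeElem k h := ⟨hhε, hhΔ⟩
  have hw₀ : counit (R := k) w = 0 := hskew.counit_eq_zero hgε hhε
  have hzero : hopfPow k H (d * p) w = 0 := by
    rw [hskew.hopfPow_mul hh hw₀ hgd hhd, ← Nat.cast_smul_eq_nsmul k, CharP.cast_eq_zero,
      zero_smul]
  exact ⟨by rw [hzero, hw₀, zero_smul], hzero⟩

/-- Let `k` be a field of characteristic `p > 0`, `H` a `k`-bialgebra, `d` a
positive integer, `g, h` grouplike elements with `g^d = 1` and `h^d = 1`, and `w` a
`(g, h)`-skew-primitive element (`Δ(w) = g ⊗ w + w ⊗ h`).  Then `w` has trivial `(d·p)`-th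
Hopf power: `w^[dp] = ε(w)·1 = 0`. -/
theorem skewPrimitive_hopfPow_trivial_charP
    {k H : Type*} [Field k] [Ring H] [Bialgebra k H]
    (p : ℕ) [CharP k p] (hp : p ≠ 0)
    (d : ℕ) (hd : 0 < d)
    (g h w : H)
    (hgΔ : Coalgebra.comul (R := k) g = g ⊗ₜ[k] g) (hgε : Coalgebra.counit (R := k) g = 1)
    (hhΔ : Coalgebra.comul (R := k) h = h ⊗ₜ[k] h) (hhε : Coalgebra.counit (R := k) h = 1)
    (hgd : g ^ d = 1) (hhd : h ^ d = 1)
    (hw : Coalgebra.comul (R := k) w = g ⊗ₜ[k] w + w ⊗ₜ[k] h) :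
    hopfPow k H (d * p) w = Coalgebra.counit (R := k) w • 1 ∧
    hopfPow k H (d * p) w = 0 :=
  skewPrimitive_hopfPow_trivial_charP_general p d g h w hgε hhΔ hhε hgd hhd hw
end

section
/- Let k be a field, let H be an associative unital k-algebra, let V be a k-vector space, and let H̄ = H ⊕ V be the direct sum of vector spaces. Let T(H) and T(H̄) denote the tensor algebras of the underlying vector spaces of H and H̄, let ι : T(H) → T(H̄) be the (injective) algebra homomorphism induced by the inclusion of vector spaces H ↪ H̄, and let π_H : T(H) → H be the unique algebra homomorphism satisfying π_H(h) = h for all h ∈ H ⊆ T(H) (so π_H(h_1 ⊗ ⋯ ⊗ h_l) = h_1 h_2 ⋯ h_l). Then the two-sided ideal of T(H̄) generated by ι(Ker π_H) intersects the image of ι exactly in ι(Ker π_H); that is, (T(H̄)·ι(Ker π_H)·T(H̄)) ∩ ι(T(H)) = ι(Ker π_H). -/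
/-- The algebra map `T(H) → T(H̄)` induced by the vector-space inclusion `H ↪ H̄ = H ⊕ V`. -/
noncomputable def tensorAlgebraIncl (k H V : Type*) [Field k] [Ring H] [Algebra k H]
    [AddCommGroup V] [Module k V] :
    TensorAlgebra k H →ₐ[k] TensorAlgebra k (H × V) :=
  TensorAlgebra.lift k ((TensorAlgebra.ι k).comp (LinearMap.inl k H V))

/-- The unique algebra map `π_H : T(H) → H` restricting to the identity on `H`,
`π_H (h₁ ⊗ ⋯ ⊗ h_l) = h₁h₂⋯h_l`. -/
noncomputable def tensorAlgebraMul (k H : Type*) [Field k] [Ring H] [Algebra k H] :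
    TensorAlgebra k H →ₐ[k] H :=
  TensorAlgebra.lift k (LinearMap.id : H →ₗ[k] H)

/-! The projection `H ⊕ V → H` induces a retraction `r` of `ι`. The preimage under `r` of the
two-sided ideal `ker π_H` is a two-sided ideal containing `ι(ker π_H)`, hence containing its span;
so if `ι y` lies in that span, then `y = r (ι y) ∈ ker π_H`. -/

theorem TwoSidedIdeal.span_image_inter_range_of_leftInverse {R S : Type*} [Ring R] [Ring S]
    (f : R →+* S) (g : S →+* R) (hgf : Function.LeftInverse g f) (I : TwoSidedIdeal R) :
    (span (f '' I) : Set S) ∩ Set.range f = f '' I := by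
  refine subset_antisymm ?_ (Set.subset_inter subset_span (Set.image_subset_range f I))
  rintro _ ⟨hx, y, rfl⟩
  have hspan : span (f '' I) ≤ I.comap g :=
    span_le.2 <| by
      rintro _ ⟨a, ha, rfl⟩
      rwa [SetLike.mem_coe, mem_comap, hgf a]
  have hy : g (f y) ∈ I := mem_comap g |>.1 (hspan hx)
  exact ⟨y, by rwa [hgf y] at hy, rfl⟩

theorem TensorAlgebra.leftInverse_lift_ι_comp {R M N : Type*} [CommSemiring R]
    [AddCommMonoid M] [Module R M] [AddCommMonoid N] [Module R N]
    (f : M →ₗ[R] N) (g : N →ₗ[R] M) (hgf : g ∘ₗ f = LinearMap.id) :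
    Function.LeftInverse (lift R (ι R ∘ₗ g)) (lift R (ι R ∘ₗ f)) := by
  have hcomp : (lift R (ι R ∘ₗ g)).comp (lift R (ι R ∘ₗ f)) = AlgHom.id R _ := by
    ext m
    simpa using congrArg (ι R) (LinearMap.congr_fun hgf m)
  exact fun x ↦ DFunLike.congr_fun hcomp x

/-- **Statement 13.** Let `H` be a `k`-algebra, `V` a `k`-vector space, `H̄ = H ⊕ V`,
`ι : T(H) → T(H̄)` the algebra map induced by the inclusion, and `π_H : T(H) → H` the unique
algebra map with `π_H(h) = h` for `h ∈ H`.  Then the two-sided ideal of `T(H̄)` generated by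
`ι(Ker π_H)` meets the image of `ι` exactly in `ι(Ker π_H)`:
`(T(H̄)·ι(Ker π_H)·T(H̄)) ∩ ι(T(H)) = ι(Ker π_H)`. -/
theorem twoSidedIdeal_span_inter_range_tensorAlgebraIncl
    (k H V : Type*) [Field k] [Ring H] [Algebra k H] [AddCommGroup V] [Module k V] :
    (TwoSidedIdeal.span
        (⇑(tensorAlgebraIncl k H V) '' (RingHom.ker (tensorAlgebraMul k H) : Set (TensorAlgebra k H)))
        : Set (TensorAlgebra k (H × V)))
      ∩ Set.range (tensorAlgebraIncl k H V)
    = ⇑(tensorAlgebraIncl k H V) '' (RingHom.ker (tensorAlgebraMul k H) : Set (TensorAlgebra k H)) := by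
  have hker : (RingHom.ker (tensorAlgebraMul k H) : Set (TensorAlgebra k H)) =
      TwoSidedIdeal.ker (tensorAlgebraMul k H) := by
    ext; simp [TwoSidedIdeal.mem_ker]
  have hretr := TensorAlgebra.leftInverse_lift_ι_comp (LinearMap.inl k H V) (LinearMap.fst k H V)
    (LinearMap.fst_comp_inl k H V)
  rw [hker]
  exact TwoSidedIdeal.span_image_inter_range_of_leftInverse (tensorAlgebraIncl k H V).toRingHom
    _ hretr _
end
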